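/- For all real numbers x and y with 0 < x < 1 and 0 < y < 1, the binary relative entropy satisfies x·log(x/y) + (1−x)·log((1−x)/(1−y)) ≥ 2(x−y)². -/

import Mathlib

open Real Set

private lemma pinsker_deriv (x : ℝ) (t : ℝ) (ht0 : 0 < t) (ht1 : t < 1) :
    HasDerivAt (fun t : ℝ => x * (Real.log x - Real.log t)
      + (1 - x) * (Real.log (1 - x) - Real.log (1 - t)) - 2 * (x - t) ^ 2)
      ((t - x) * (1 / (t * (1 - t)) - 4)) t := by
  have h1t : (1 : ℝ) - t ≠ 0 := by linarith
  have h1 : HasDerivAt (fun t : ℝ => Real.log t) t⁻¹ t := Real.hasDerivAt_log ht0.ne'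
  have h2 : HasDerivAt (fun t : ℝ => Real.log (1 - t)) ((1 - t)⁻¹ * (-1)) t := by
    exact (Real.hasDerivAt_log h1t).comp t ((hasDerivAt_id t).const_sub 1)
  have h3 : HasDerivAt (fun t : ℝ => (x - t) ^ 2) (2 * (x - t) ^ 1 * (-1)) t :=
    ((hasDerivAt_id t).const_sub x).pow 2
  have H := (((h1.const_sub (Real.log x)).const_mul x).add
      ((h2.const_sub (Real.log (1 - x))).const_mul (1 - x))).sub (h3.const_mul 2)
  refine H.congr_deriv ?_
  field_simp [ht0.ne', h1t]
  ring

private lemma pinsker_aux (x : ℝ) (hx0 : 0 < x) (hx1 : x < 1) (y : ℝ)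
    (hy0 : 0 < y) (hy1 : y < 1) :
    0 ≤ x * (Real.log x - Real.log y)
      + (1 - x) * (Real.log (1 - x) - Real.log (1 - y)) - 2 * (x - y) ^ 2 := by
  set g : ℝ → ℝ := fun t => x * (Real.log x - Real.log t)
      + (1 - x) * (Real.log (1 - x) - Real.log (1 - t)) - 2 * (x - t) ^ 2 with hg
  have hgx : g x = 0 := by simp [hg]
  have hderiv : ∀ t ∈ Ioo (0:ℝ) 1,
      HasDerivAt g ((t - x) * (1 / (t * (1 - t)) - 4)) t := fun t ht =>
    pinsker_deriv x t ht.1 ht.2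
  have hfac : ∀ t ∈ Ioo (0:ℝ) 1, 0 ≤ 1 / (t * (1 - t)) - 4 := by
    intro t ht
    have h1 : 0 < t * (1 - t) := mul_pos ht.1 (by linarith [ht.2])
    rw [sub_nonneg, le_div_iff₀ h1]
    nlinarith [sq_nonneg (t - 1/2)]
  rcases le_or_gt x y with hxy | hxy
  · -- g monotone on [x, y]
    have hsub : Icc x y ⊆ Ioo (0:ℝ) 1 := fun t ht => ⟨lt_of_lt_of_le hx0 ht.1,
      lt_of_le_of_lt ht.2 hy1⟩
    have hmono : MonotoneOn g (Icc x y) := by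
      apply monotoneOn_of_deriv_nonneg (convex_Icc x y)
      · exact fun t ht => (hderiv t (hsub ht)).continuousAt.continuousWithinAt
      · intro t ht
        rw [interior_Icc] at ht
        exact (hderiv t (hsub (Ioo_subset_Icc_self ht))).differentiableAt.differentiableWithinAt
      · intro t ht
        rw [interior_Icc] at ht
        have ht' := hsub (Ioo_subset_Icc_self ht)
        rw [(hderiv t ht').deriv]
        exact mul_nonneg (by linarith [ht.1]) (hfac t ht')
    have := hmono ⟨le_refl x, hxy⟩ ⟨hxy, le_refl y⟩ hxy
    rw [hgx] at this
    exact this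
  · -- g antitone on [y, x]
    have hsub : Icc y x ⊆ Ioo (0:ℝ) 1 := fun t ht => ⟨lt_of_lt_of_le hy0 ht.1,
      lt_of_le_of_lt ht.2 hx1⟩
    have hmono : AntitoneOn g (Icc y x) := by
      apply antitoneOn_of_deriv_nonpos (convex_Icc y x)
      · exact fun t ht => (hderiv t (hsub ht)).continuousAt.continuousWithinAt
      · intro t ht
        rw [interior_Icc] at ht
        exact (hderiv t (hsub (Ioo_subset_Icc_self ht))).differentiableAt.differentiableWithinAt
      · intro t ht
        rw [interior_Icc] at ht
        have ht' := hsub (Ioo_subset_Icc_self ht)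
        rw [(hderiv t ht').deriv]
        exact mul_nonpos_of_nonpos_of_nonneg (by linarith [ht.2]) (hfac t ht')
    have := hmono ⟨le_refl y, hxy.le⟩ ⟨hxy.le, le_refl x⟩ hxy.le
    rw [hgx] at this
    exact this

/-- For all `x, y ∈ (0,1)`, the binary relative entropy
`x·log(x/y) + (1−x)·log((1−x)/(1−y))` is bounded below by `2(x−y)²` (Pinsker-type bound). -/
theorem binary_relative_entropy_ge_two_mul_sq (x y : ℝ)
    (hx0 : 0 < x) (hx1 : x < 1) (hy0 : 0 < y) (hy1 : y < 1) :
    x * Real.log (x / y) + (1 - x) * Real.log ((1 - x) / (1 - y)) ≥ 2 * (x - y) ^ 2 := by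
  have h1 := pinsker_aux x hx0 hx1 y hy0 hy1
  rw [Real.log_div hx0.ne' hy0.ne', Real.log_div (by linarith : (1:ℝ) - x ≠ 0)
    (by linarith : (1:ℝ) - y ≠ 0)]
  linarith
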